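/- Let n ≥ 1, α ∈ (1,2), ε ∈ (0,1), and let φ̃(x) = x₁^α − ε^α |x|^α on ℝⁿ. Then for every x ∈ ℝⁿ with 0 < x₁ (so that x₁ ≤ |x|), one has the matrix inequality D²φ̃(x) − α ε^α |x|^{α−2} Iₙ ⪰ α |x|^{α−2} · diag(α − 1 − 2ε^α, −2ε^α, …, −2ε^α), i.e., the difference of the left-hand side and the right-hand side is positive semidefinite. -/

import Mathlib

/-!
The Hessian is computed explicitly:
`D²φ̃(x) = α(α-1) x₁^{α-2} e₁e₁ᵀ - α ε^α (|x|^{α-2} Iₙ + (α-2) |x|^{α-4} x xᵀ)`.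
After subtracting the two matrices of the statement, the identity and the off-`e₁` parts of the
diagonal cancel, leaving
`α(α-1) (x₁^{α-2} - |x|^{α-2}) e₁e₁ᵀ + α(2-α) ε^α |x|^{α-4} x xᵀ`,
a sum of rank-one matrices with nonnegative coefficients, since `x₁ ≤ |x|` and `α - 2 < 0`.
-/

open Real Set

/-- The weight `φ̃(x) = x₁^α - ε^α |x|^α`. -/
noncomputable def phit {n : ℕ} [NeZero n] (α ε : ℝ)
    (x : EuclideanSpace ℝ (Fin n)) : ℝ :=
  x 0 ^ α - ε ^ α * ‖x‖ ^ α

/-- The Hessian matrix of `f` at `x`: `(i, j) ↦ ∂ᵢ∂ⱼ f (x)`. -/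
noncomputable def hess {n : ℕ} (f : EuclideanSpace ℝ (Fin n) → ℝ)
    (x : EuclideanSpace ℝ (Fin n)) : Matrix (Fin n) (Fin n) ℝ :=
  Matrix.of fun i j =>
    fderiv ℝ (fun y => fderiv ℝ f y (EuclideanSpace.single j 1)) x
      (EuclideanSpace.single i 1)

open Filter Topology Matrix

theorem hasFDerivAt_norm_rpow_of_ne_zero {E : Type*} [NormedAddCommGroup E]
    [InnerProductSpace ℝ E] {x : E} (hx : x ≠ 0) (p : ℝ) :
    HasFDerivAt (fun x : E ↦ ‖x‖ ^ p) ((p * ‖x‖ ^ (p - 2)) • innerSL ℝ x) x := by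
  convert! ((hasStrictFDerivAt_norm_sq x).rpow_const (p := p / 2) (by simp [hx])).hasFDerivAt
    using 0
  simp_rw [← Real.rpow_natCast_mul (norm_nonneg _), ← Nat.cast_smul_eq_nsmul ℝ, smul_smul]
  ring_nf

theorem posSemidef_smul_vecMulVec_self {m : Type*} [Fintype m] {c : ℝ} (hc : 0 ≤ c)
    (a : m → ℝ) : (c • vecMulVec a a).PosSemidef := by
  simpa using (posSemidef_vecMulVec_self_star a).smul hc

section Hessian

variable {n : ℕ}

local notation "E" => EuclideanSpace ℝ (Fin n)

theorem hess_eq_of_hasFDerivAt {f : E → ℝ} {f' : E → E →L[ℝ] ℝ} {f'' : E →L[ℝ] E →L[ℝ] ℝ}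
    {x : E} (hf : ∀ᶠ y in 𝓝 x, HasFDerivAt f (f' y) y) (hf' : HasFDerivAt f' f'' x) :
    hess f x = Matrix.of fun i j =>
      f'' (EuclideanSpace.single i 1) (EuclideanSpace.single j 1) := by
  ext i j
  set v : E := EuclideanSpace.single j 1
  have hfv : (fun y => fderiv ℝ f y v) =ᶠ[𝓝 x] fun y => f' y v :=
    hf.mono fun y hy => by simp only [hy.fderiv]
  have hf'v : HasFDerivAt (fun y => f' y v) ((ContinuousLinearMap.apply ℝ ℝ v).comp f'') x :=
    (ContinuousLinearMap.apply ℝ ℝ v).hasFDerivAt.comp x hf'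
  rw [hess, of_apply, of_apply, hfv.fderiv_eq, hf'v.fderiv]
  rfl

variable [NeZero n] (α ε : ℝ)

noncomputable def phitDeriv (y : E) : E →L[ℝ] ℝ :=
  (α * y 0 ^ (α - 1)) • (EuclideanSpace.proj 0 : E →L[ℝ] ℝ)
    - (α * ε ^ α * ‖y‖ ^ (α - 2)) • innerSL ℝ y

variable {α ε}

theorem hasFDerivAt_phit {y : E} (hy : 0 < y 0) :
    HasFDerivAt (phit α ε) (phitDeriv α ε y) y := by
  have hy0 : y ≠ 0 := fun h => by simp [h] at hy
  refine (((EuclideanSpace.proj 0 : E →L[ℝ] ℝ).hasFDerivAt.rpow_const (Or.inl hy.ne')).sub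
    ((hasFDerivAt_norm_rpow_of_ne_zero hy0 α).const_mul (ε ^ α))).congr_fderiv ?_
  rw [phitDeriv, smul_smul, mul_left_comm, ← mul_assoc]
  rfl

theorem hess_phit {x : E} (hx : 0 < x 0) :
    hess (phit α ε) x
      = (α * (α - 1) * x 0 ^ (α - 2)) • vecMulVec (Pi.single 0 1) (Pi.single 0 1)
        - (α * ε ^ α) • (‖x‖ ^ (α - 2) • (1 : Matrix (Fin n) (Fin n) ℝ)
          + ((α - 2) * ‖x‖ ^ (α - 4)) • vecMulVec ⇑x ⇑x) := by
  have hx0 : x ≠ 0 := fun h => by simp [h] at hx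
  have hgrad : ∀ᶠ y in 𝓝 x, HasFDerivAt (phit α ε) (phitDeriv α ε y) y :=
    (isOpen_lt continuous_const (EuclideanSpace.proj (0 : Fin n)).continuous).eventually_mem hx
      |>.mono fun y hy => hasFDerivAt_phit hy
  have hphitDeriv := ((((EuclideanSpace.proj 0 : E →L[ℝ] ℝ).hasFDerivAt.rpow_const (p := α - 1)
      (Or.inl hx.ne')).const_mul α).smul_const
      (EuclideanSpace.proj 0 : E →L[ℝ] ℝ)).sub
    (((hasFDerivAt_norm_rpow_of_ne_zero hx0 (α - 2)).const_mul (α * ε ^ α)).smul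
      (innerSL ℝ : E →L[ℝ] E →L[ℝ] ℝ).hasFDerivAt)
  rw [hess_eq_of_hasFDerivAt hgrad hphitDeriv]
  ext i j
  simp only [of_apply, FunLike.coe_sub, FunLike.coe_add, FunLike.coe_smul, Pi.sub_apply,
    Pi.add_apply, Pi.smul_apply, ContinuousLinearMap.smulRight_apply, innerSL_apply_apply,
    smul_eq_mul, PiLp.proj_apply, EuclideanSpace.inner_single_right, PiLp.single_apply,
    Matrix.sub_apply, Matrix.add_apply, Matrix.smul_apply, Matrix.one_apply, vecMulVec_apply,
    Pi.single_apply]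
  rw [innerSL_apply_apply, innerSL_apply_apply, EuclideanSpace.inner_single_left,
    EuclideanSpace.inner_single_right, PiLp.single_apply, show α - 1 - 1 = α - 2 by ring,
    show α - 2 - 2 = α - 4 by ring]
  simp only [starRingEnd_apply, star_trivial, eq_comm (a := (0 : Fin n))]
  split_ifs <;> ring

theorem hess_phit_sub_eq {x : E} (hx : 0 < x 0) :
    hess (phit α ε) x
      - (α * ε ^ α * ‖x‖ ^ (α - 2)) • (1 : Matrix (Fin n) (Fin n) ℝ)
      - (α * ‖x‖ ^ (α - 2)) • diagonal
          (fun i : Fin n => if i = 0 then α - 1 - 2 * ε ^ α else -(2 * ε ^ α))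
      = (α * (α - 1) * (x 0 ^ (α - 2) - ‖x‖ ^ (α - 2))) • vecMulVec (Pi.single 0 1) (Pi.single 0 1)
        + (α * (2 - α) * ε ^ α * ‖x‖ ^ (α - 4)) • vecMulVec ⇑x ⇑x := by
  rw [hess_phit hx]
  ext i j
  simp only [Matrix.sub_apply, Matrix.add_apply, Matrix.smul_apply, Matrix.one_apply,
    diagonal_apply, vecMulVec_apply, Pi.single_apply, smul_eq_mul]
  split_ifs <;> simp_all <;> ring

end Hessian

theorem hessian_lower_bound_general (n : ℕ) [NeZero n] (α ε : ℝ)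
    (hα : α ∈ Set.Ioo (1 : ℝ) 2) (hε : ε ∈ Set.Ioo (0 : ℝ) 1)
    (x : EuclideanSpace ℝ (Fin n)) (hx : 0 < x 0) :
    (hess (phit α ε) x
      - (α * ε ^ α * ‖x‖ ^ (α - 2)) • (1 : Matrix (Fin n) (Fin n) ℝ)
      - (α * ‖x‖ ^ (α - 2)) • Matrix.diagonal
          (fun i : Fin n => if i = 0 then α - 1 - 2 * ε ^ α else -(2 * ε ^ α))).PosSemidef := by
  obtain ⟨hα1, hα2⟩ := hα
  have hx_le : x 0 ≤ ‖x‖ := (le_abs_self _).trans (PiLp.norm_apply_le x 0)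
  have hpow : ‖x‖ ^ (α - 2) ≤ x 0 ^ (α - 2) := rpow_le_rpow_of_nonpos hx hx_le (by linarith)
  rw [hess_phit_sub_eq hx]
  refine (posSemidef_smul_vecMulVec_self ?_ _).add (posSemidef_smul_vecMulVec_self ?_ _)
  · exact mul_nonneg (by nlinarith) (sub_nonneg.2 hpow)
  · have : 0 ≤ α * (2 - α) := by nlinarith
    have := rpow_nonneg hε.1.le α
    have := rpow_nonneg (norm_nonneg x) (α - 4)
    positivity

/-- For `φ̃(x) = x₁^α - ε^α |x|^α` and `x₁ > 0`, one has the matrix inequality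
`D²φ̃(x) - α ε^α |x|^{α-2} Iₙ ⪰ α |x|^{α-2} diag(α - 1 - 2ε^α, -2ε^α, …, -2ε^α)`. -/
theorem hessian_lower_bound (n : ℕ) [NeZero n] (hn : 1 ≤ n) (α ε : ℝ)
    (hα : α ∈ Set.Ioo (1 : ℝ) 2) (hε : ε ∈ Set.Ioo (0 : ℝ) 1)
    (x : EuclideanSpace ℝ (Fin n)) (hx : 0 < x 0) :
    (hess (phit α ε) x
      - (α * ε ^ α * ‖x‖ ^ (α - 2)) • (1 : Matrix (Fin n) (Fin n) ℝ)
      - (α * ‖x‖ ^ (α - 2)) • Matrix.diagonal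
          (fun i : Fin n => if i = 0 then α - 1 - 2 * ε ^ α else -(2 * ε ^ α))).PosSemidef :=
  hessian_lower_bound_general n α ε hα hε x hx
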